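/- arXiv:2007.06438 — 3 statements merged into one kernel-verified Lean document; each statement's English description precedes it below -/
import Mathlib

section
/- Let G be a reflexive graph (every vertex is looped), Π = Π(G) its fundamental groupoid, and E = ev(Π(G)) its even subgroupoid (same objects, arrows the ≡-classes of even-length walks). Then the map Ψ: Π → E × ℤ/2 sending an even class α to (α, 0) and an odd class α, represented by a walk ending at vertex vₙ, to (the class of α with vₙ appended once more, 1), is an isomorphism of groupoids; hence Π(G) ≅ ev(Π(G)) × ℤ/2. -/
/-- A graph: vertex type `V` with a symmetric adjacency relation (loops allowed). -/
structure LoopGraph (V : Type) where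
  Adj : V → V → Prop
  symm : Symmetric Adj

variable {V W X : Type}

/-- `l` is the (nonempty) vertex sequence of a walk in `G`. -/
def IsWalk (G : LoopGraph V) (l : List V) : Prop :=
  l ≠ [] ∧ l.Chain' G.Adj

/-- `l` is a walk in `G` from `x` to `y`. -/
def IsWalkFrom (G : LoopGraph V) (x y : V) (l : List V) : Prop :=
  l.Chain' G.Adj ∧ l.head? = some x ∧ l.getLast? = some y

/-- Concatenation of walks sharing an endpoint: follow `l`, then `m`. -/
def wconcat (l m : List V) : List V := l ++ m.tail

/-- A walk is prunable if some vertex `vᵢ` satisfies `vᵢ = vᵢ₊₂`. -/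
def Prunable (l : List V) : Prop :=
  ∃ (p s : List V) (a b : V), l = p ++ a :: b :: a :: s

/-- `m` is obtained from `l` by a single prune (deleting `vᵢ, vᵢ₊₁` when `vᵢ = vᵢ₊₂`). -/
def PruneOf (l m : List V) : Prop :=
  ∃ (p s : List V) (a b : V), l = p ++ a :: b :: a :: s ∧ m = p ++ a :: s

/-- A single prune step (in either direction) between walks of `G`. -/
def PruneStep (G : LoopGraph V) (l m : List V) : Prop :=
  IsWalk G l ∧ IsWalk G m ∧ (PruneOf l m ∨ PruneOf m l)

/-- Prune equivalence: the equivalence relation on walks of `G` generated by prunes. -/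
def PruneEqv (G : LoopGraph V) : List V → List V → Prop :=
  Relation.EqvGen (PruneStep G)

/-- A spider move: two walks of `G` of the same length which agree at every index
except (at most) a single interior index. -/
def SpiderStep (G : LoopGraph V) (l m : List V) : Prop :=
  IsWalk G l ∧ IsWalk G m ∧ l.length = m.length ∧
    ∃ i : ℕ, 0 < i ∧ i + 1 < l.length ∧ ∀ j : ℕ, j ≠ i → l[j]? = m[j]?

/-- Homotopy rel endpoints (`≡`): the equivalence relation on walks of `G`
generated by prunes and spider moves. -/
def HomEqv (G : LoopGraph V) : List V → List V → Prop :=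
  Relation.EqvGen (fun l m => PruneStep G l m ∨ SpiderStep G l m)

/-- A graph morphism. -/
def IsHom (G : LoopGraph V) (H : LoopGraph W) (f : V → W) : Prop :=
  ∀ {u v : V}, G.Adj u v → H.Adj (f u) (f v)

/-- One step of a ×-homotopy between graph morphisms. -/
def HtpyStep (G : LoopGraph V) (H : LoopGraph W) (f g : V → W) : Prop :=
  IsHom G H f ∧ IsHom G H g ∧ ∀ u v, G.Adj u v → H.Adj (f u) (g v)

/-- ×-homotopy of graph morphisms. -/
def Homotopic (G : LoopGraph V) (H : LoopGraph W) : (V → W) → (V → W) → Prop :=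
  Relation.ReflTransGen (HtpyStep G H)

/-- `evenize` of a walk: the walk itself if it has even length (odd list length),
otherwise the walk with its last vertex repeated once more (an even walk, using the
loop at the last vertex in a reflexive graph). -/
def evenize (l : List V) : List V :=
  if l.length % 2 = 1 then l else l ++ l.getLast?.toList

/-!
Every vertex carries a loop, so repeating the last vertex of a walk changes its parity and
nothing else: it is a congruence for `≡`, and repeating it twice can be pruned away. A doubled
vertex can moreover be slid along a walk by spider moves, one index at a time, so
`α * (y y) * β ≡ (α * β) * (z z)`; this is what makes evenization multiplicative.
-/

def repeatLast (l : List V) : List V :=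
  l ++ l.getLast?.toList

variable {G : LoopGraph V} {l m : List V}

theorem getLast?_repeatLast (l : List V) : (repeatLast l).getLast? = l.getLast? := by
  rcases List.eq_nil_or_concat' l with rfl | ⟨p, y, rfl⟩ <;> simp [repeatLast]

theorem length_repeatLast (hl : l ≠ []) : (repeatLast l).length = l.length + 1 := by
  rcases List.eq_nil_or_concat' l with rfl | ⟨p, y, rfl⟩
  · contradiction
  · simp [repeatLast]

theorem repeatLast_append_singleton (p : List V) (y : V) :
    repeatLast (p ++ [y]) = p ++ [y, y] := by
  simp [repeatLast]

theorem evenize_of_odd (h : l.length % 2 = 1) : evenize l = l :=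
  if_pos h

theorem evenize_of_even (h : l.length % 2 = 0) : evenize l = repeatLast l :=
  if_neg (by omega)

theorem IsWalkFrom.isWalk {x y : V} (h : IsWalkFrom G x y l) : IsWalk G l :=
  ⟨by rintro rfl; simp [IsWalkFrom] at h, h.1⟩

theorem IsWalkFrom.exists_eq_append {x y : V} (h : IsWalkFrom G x y l) : ∃ p, l = p ++ [y] := by
  rcases List.eq_nil_or_concat' l with rfl | ⟨p, b, rfl⟩
  · simp [IsWalkFrom] at h
  · exact ⟨p, by simpa using h.2.2⟩

theorem IsWalkFrom.exists_eq_cons {x y : V} (h : IsWalkFrom G x y l) : ∃ t, l = x :: t := by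
  rcases l with _ | ⟨b, t⟩
  · simp [IsWalkFrom] at h
  · exact ⟨t, by simpa using h.2.1⟩

theorem IsWalk.repeatLast (hrefl : ∀ v, G.Adj v v) (h : IsWalk G l) :
    IsWalk G (repeatLast l) := by
  rcases List.eq_nil_or_concat' l with rfl | ⟨p, y, rfl⟩
  · exact absurd rfl h.1
  · refine ⟨by simp [_root_.repeatLast], ?_⟩
    rw [repeatLast_append_singleton, show p ++ [y, y] = p ++ [y] ++ [y] by simp]
    exact h.2.append (List.isChain_singleton y) (by simp [hrefl])

theorem IsWalkFrom.repeatLast (hrefl : ∀ v, G.Adj v v) {x y : V} (h : IsWalkFrom G x y l) :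
    IsWalkFrom G x y (repeatLast l) := by
  refine ⟨(h.isWalk.repeatLast hrefl).2, ?_, by rw [getLast?_repeatLast, h.2.2]⟩
  obtain ⟨t, rfl⟩ := h.exists_eq_cons
  simp [_root_.repeatLast]

theorem IsWalk.append_cons_cons (hrefl : ∀ v, G.Adj v v) {p s : List V} {y : V}
    (h : IsWalk G (p ++ y :: s)) : IsWalk G (p ++ y :: y :: s) := by
  obtain ⟨hp, hs, hjoin⟩ := List.isChain_append.1 h.2
  exact ⟨by simp,
    List.isChain_append.2 ⟨hp, List.isChain_cons_cons.2 ⟨hrefl y, hs⟩, hjoin⟩⟩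

theorem PruneOf.getLast?_eq (h : PruneOf l m) : l.getLast? = m.getLast? := by
  obtain ⟨p, s, a, b, rfl, rfl⟩ := h
  rcases List.eq_nil_or_concat' s with rfl | ⟨t, c, rfl⟩ <;> simp [List.getLast?_append]

theorem PruneOf.length_eq (h : PruneOf l m) : l.length = m.length + 2 := by
  obtain ⟨p, s, a, b, rfl, rfl⟩ := h
  simp only [List.length_append, List.length_cons]
  omega

theorem PruneOf.append_right (h : PruneOf l m) (s : List V) : PruneOf (l ++ s) (m ++ s) := by
  obtain ⟨p, t, a, b, rfl, rfl⟩ := h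
  exact ⟨p, t ++ s, a, b, by simp, by simp⟩

theorem PruneStep.getLast?_eq (h : PruneStep G l m) : l.getLast? = m.getLast? :=
  h.2.2.elim PruneOf.getLast?_eq fun h' => h'.getLast?_eq.symm

theorem SpiderStep.getLast?_eq (h : SpiderStep G l m) : l.getLast? = m.getLast? := by
  obtain ⟨-, -, hlen, i, -, hi, hj⟩ := h
  rw [List.getLast?_eq_getElem?, List.getLast?_eq_getElem?, hlen]
  exact hj _ (by omega)

theorem PruneStep.repeatLast (hrefl : ∀ v, G.Adj v v) (h : PruneStep G l m) :
    PruneStep G (repeatLast l) (repeatLast m) := by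
  refine ⟨h.1.repeatLast hrefl, h.2.1.repeatLast hrefl, ?_⟩
  rw [_root_.repeatLast, _root_.repeatLast, h.getLast?_eq]
  exact h.2.2.imp (·.append_right _) (·.append_right _)

theorem SpiderStep.repeatLast (hrefl : ∀ v, G.Adj v v) (h : SpiderStep G l m) :
    SpiderStep G (repeatLast l) (repeatLast m) := by
  have hlast := h.getLast?_eq
  obtain ⟨hl, hm, hlen, i, hi0, hi, hj⟩ := h
  refine ⟨hl.repeatLast hrefl, hm.repeatLast hrefl,
    by rw [length_repeatLast hl.1, length_repeatLast hm.1, hlen], i, hi0,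
    by rw [length_repeatLast hl.1]; omega, fun j hji => ?_⟩
  simp only [_root_.repeatLast, List.getElem?_append, hlen, hlast, hj j hji]

theorem spiderStep_append_cons {p s : List V} {b c : V} (hp : p ≠ []) (hs : s ≠ [])
    (hb : IsWalk G (p ++ b :: s)) (hc : IsWalk G (p ++ c :: s)) :
    SpiderStep G (p ++ b :: s) (p ++ c :: s) := by
  refine ⟨hb, hc, by simp, p.length, List.length_pos_iff.2 hp,
    by simp [List.length_pos_iff.2 hs], fun j hj => ?_⟩
  simp only [List.getElem?_append]
  split_ifs
  · rfl
  · obtain ⟨k, hk⟩ : ∃ k, j - p.length = k + 1 := Nat.exists_eq_add_one.2 (by omega)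
    simp [hk]

theorem HomEqv.refl (G : LoopGraph V) (l : List V) : HomEqv G l l :=
  Relation.EqvGen.refl l

theorem HomEqv.symm (h : HomEqv G l m) : HomEqv G m l :=
  Relation.EqvGen.symm _ _ h

theorem HomEqv.trans {n : List V} (h : HomEqv G l m) (h' : HomEqv G m n) : HomEqv G l n :=
  Relation.EqvGen.trans _ _ _ h h'

theorem HomEqv.of_pruneStep (h : PruneStep G l m) : HomEqv G l m :=
  Relation.EqvGen.rel _ _ (Or.inl h)

theorem HomEqv.of_spiderStep (h : SpiderStep G l m) : HomEqv G l m :=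
  Relation.EqvGen.rel _ _ (Or.inr h)

theorem HomEqv.eq_of_step {β : Type*} (f : List V → β)
    (hf : ∀ l m, PruneStep G l m ∨ SpiderStep G l m → f l = f m) (h : HomEqv G l m) :
    f l = f m :=
  congrArg (Quot.lift f hf) (Quot.eqvGen_sound h)

theorem HomEqv.getLast?_eq (h : HomEqv G l m) : l.getLast? = m.getLast? :=
  h.eq_of_step _ fun _ _ step => step.elim PruneStep.getLast?_eq SpiderStep.getLast?_eq

theorem HomEqv.length_mod_two_eq (h : HomEqv G l m) : l.length % 2 = m.length % 2 :=
  h.eq_of_step (·.length % 2) fun _ _ step => by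
    rcases step with ⟨-, -, hp | hp⟩ | ⟨-, -, hlen, -⟩
    · simp [hp.length_eq]
    · simp [hp.length_eq]
    · rw [hlen]

theorem HomEqv.map (f : List V → List V)
    (hf : ∀ l m, PruneStep G l m ∨ SpiderStep G l m →
      PruneStep G (f l) (f m) ∨ SpiderStep G (f l) (f m))
    (h : HomEqv G l m) : HomEqv G (f l) (f m) := by
  induction h with
  | rel l m step => exact Relation.EqvGen.rel _ _ (hf l m step)
  | refl l => exact HomEqv.refl G (f l)
  | symm _ _ _ ih => exact ih.symm
  | trans _ _ _ _ _ ih ih' => exact ih.trans ih'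

theorem HomEqv.repeatLast (hrefl : ∀ v, G.Adj v v) (h : HomEqv G l m) :
    HomEqv G (repeatLast l) (repeatLast m) :=
  h.map _ fun _ _ step => step.imp (·.repeatLast hrefl) (·.repeatLast hrefl)

theorem homEqv_repeatLast_repeatLast (hrefl : ∀ v, G.Adj v v) (h : IsWalk G l) :
    HomEqv G (repeatLast (repeatLast l)) l := by
  rcases List.eq_nil_or_concat' l with rfl | ⟨p, y, rfl⟩
  · exact absurd rfl h.1
  · refine HomEqv.of_pruneStep ⟨(h.repeatLast hrefl).repeatLast hrefl, h, Or.inl ?_⟩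
    exact ⟨p, [], y, y, by simp [repeatLast], by simp⟩

theorem homEqv_repeatLast_iff (hrefl : ∀ v, G.Adj v v) (hl : IsWalk G l) (hm : IsWalk G m) :
    HomEqv G (repeatLast l) (repeatLast m) ↔ HomEqv G l m :=
  ⟨fun h => (homEqv_repeatLast_repeatLast hrefl hl).symm.trans
      ((h.repeatLast hrefl).trans (homEqv_repeatLast_repeatLast hrefl hm)),
    HomEqv.repeatLast hrefl⟩

/-- Spider moves slide a doubled vertex (a loop step) to the end of the walk. -/
theorem homEqv_append_cons_cons (hrefl : ∀ v, G.Adj v v) {s : List V} :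
    ∀ {p : List V} {y : V}, IsWalk G (p ++ y :: s) →
      HomEqv G (p ++ y :: y :: s) (repeatLast (p ++ y :: s)) := by
  induction s with
  | nil =>
    intro p y _
    rw [repeatLast_append_singleton]
    exact HomEqv.refl G _
  | cons a s ih =>
    intro p y h
    have h' : IsWalk G ((p ++ [y]) ++ a :: s) := by simpa using h
    have hmove : SpiderStep G ((p ++ [y]) ++ y :: a :: s) ((p ++ [y]) ++ a :: a :: s) :=
      spiderStep_append_cons (by simp) (List.cons_ne_nil a s)
        (by simpa using h.append_cons_cons hrefl) (h'.append_cons_cons hrefl)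
    simpa using (HomEqv.of_spiderStep hmove).trans (ih h')

section Concatenation

variable {α β : List V} {x y z : V}

theorem wconcat_append_singleton_cons (p t : List V) (y : V) :
    wconcat (p ++ [y]) (y :: t) = p ++ y :: t := by
  simp [wconcat]

theorem IsWalkFrom.wconcat (hα : IsWalkFrom G x y α) (hβ : IsWalkFrom G y z β) :
    IsWalkFrom G x z (wconcat α β) := by
  obtain ⟨p, rfl⟩ := hα.exists_eq_append
  obtain ⟨t, rfl⟩ := hβ.exists_eq_cons
  obtain ⟨hp, -, hjoin⟩ := List.isChain_append.1 hα.1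
  rw [wconcat_append_singleton_cons]
  refine ⟨List.isChain_append.2 ⟨hp, hβ.1, by simpa using hjoin⟩, ?_, ?_⟩
  · simpa [List.head?_append] using hα.2.1
  · simpa [List.getLast?_append] using hβ.2.2

theorem length_wconcat (hβ : β ≠ []) : (wconcat α β).length + 1 = α.length + β.length := by
  have := List.length_pos_iff.2 hβ
  simp only [wconcat, List.length_append, List.length_tail]
  omega

theorem wconcat_repeatLast (hα : IsWalkFrom G x y α) (hβ : IsWalkFrom G y z β) :
    wconcat α (repeatLast β) = repeatLast (wconcat α β) := by
  obtain ⟨p, rfl⟩ := hα.exists_eq_append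
  obtain ⟨t, rfl⟩ := hβ.exists_eq_cons
  simp [wconcat, repeatLast, List.getLast?_append,
    List.getLast?_eq_some_getLast (List.cons_ne_nil y t)]

theorem homEqv_wconcat_repeatLast (hrefl : ∀ v, G.Adj v v) (hα : IsWalkFrom G x y α)
    (hβ : IsWalkFrom G y z β) :
    HomEqv G (wconcat (repeatLast α) β) (repeatLast (wconcat α β)) := by
  have hw := (hα.wconcat hβ).isWalk
  obtain ⟨p, rfl⟩ := hα.exists_eq_append
  obtain ⟨t, rfl⟩ := hβ.exists_eq_cons
  rw [wconcat_append_singleton_cons] at hw ⊢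
  simpa [wconcat, repeatLast_append_singleton] using homEqv_append_cons_cons hrefl hw

theorem homEqv_evenize_wconcat (hrefl : ∀ v, G.Adj v v) (hα : IsWalkFrom G x y α)
    (hβ : IsWalkFrom G y z β) :
    HomEqv G (evenize (wconcat α β)) (wconcat (evenize α) (evenize β)) := by
  have hlen := length_wconcat (α := α) hβ.isWalk.1
  rcases Nat.mod_two_eq_zero_or_one α.length with hα2 | hα2 <;>
    rcases Nat.mod_two_eq_zero_or_one β.length with hβ2 | hβ2
  · rw [evenize_of_odd (by omega), evenize_of_even hα2, evenize_of_even hβ2]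
    refine (homEqv_repeatLast_repeatLast hrefl (hα.wconcat hβ).isWalk).symm.trans ?_
    rw [← wconcat_repeatLast hα hβ]
    exact (homEqv_wconcat_repeatLast hrefl hα (hβ.repeatLast hrefl)).symm
  · rw [evenize_of_even (by omega), evenize_of_even hα2, evenize_of_odd hβ2]
    exact (homEqv_wconcat_repeatLast hrefl hα hβ).symm
  · rw [evenize_of_even (by omega), evenize_of_odd hα2, evenize_of_even hβ2,
      wconcat_repeatLast hα hβ]
    exact HomEqv.refl G _
  · rw [evenize_of_odd (by omega), evenize_of_odd hα2, evenize_of_odd hβ2]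
    exact HomEqv.refl G _

end Concatenation

theorem homEqv_iff_evenize (hrefl : ∀ v, G.Adj v v) (hl : IsWalk G l) (hm : IsWalk G m) :
    HomEqv G l m ↔ l.length % 2 = m.length % 2 ∧ HomEqv G (evenize l) (evenize m) := by
  refine ⟨fun h => ⟨h.length_mod_two_eq, ?_⟩, fun ⟨hpar, h⟩ => ?_⟩
  · rcases Nat.mod_two_eq_zero_or_one l.length with hl2 | hl2
    · rw [evenize_of_even hl2, evenize_of_even (h.length_mod_two_eq ▸ hl2)]
      exact h.repeatLast hrefl
    · rwa [evenize_of_odd hl2, evenize_of_odd (h.length_mod_two_eq ▸ hl2)]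
  · rcases Nat.mod_two_eq_zero_or_one l.length with hl2 | hl2
    · rw [evenize_of_even hl2, evenize_of_even (hpar ▸ hl2)] at h
      exact (homEqv_repeatLast_iff hrefl hl hm).1 h
    · rwa [evenize_of_odd hl2, evenize_of_odd (hpar ▸ hl2)] at h

/-- for a reflexive graph `G`, the map `Ψ : Π(G) → ev(Π(G)) × ℤ/2`,
sending a class `α` to (its evenization, its parity), is an isomorphism of groupoids:
it is well-defined and injective on `≡`-classes of walks between any two fixed
vertices (first clause, an iff), surjective (second clause; evenization of an even
walk is itself, so only the odd fibre needs checking), and multiplicative with respect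
to concatenation (third clause; parities add automatically). -/
theorem stmt16 (G : LoopGraph V) (hrefl : ∀ v : V, G.Adj v v) :
    (∀ (x y : V) (α β : List V), IsWalkFrom G x y α → IsWalkFrom G x y β →
      (HomEqv G α β ↔
        (α.length % 2 = β.length % 2 ∧ HomEqv G (evenize α) (evenize β)))) ∧
    (∀ (x y : V) (α : List V), IsWalkFrom G x y α → α.length % 2 = 1 →
      ∃ β : List V, IsWalkFrom G x y β ∧ β.length % 2 = 0 ∧ HomEqv G (evenize β) α) ∧
    (∀ (x y z : V) (α β : List V), IsWalkFrom G x y α → IsWalkFrom G y z β →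
      HomEqv G (evenize (wconcat α β)) (wconcat (evenize α) (evenize β))) := by
  refine ⟨fun _ _ _ _ hα hβ => homEqv_iff_evenize hrefl hα.isWalk hβ.isWalk, ?_,
    fun _ _ _ _ _ hα hβ => homEqv_evenize_wconcat hrefl hα hβ⟩
  intro x y α hα hodd
  have hlen : (repeatLast α).length % 2 = 0 := by
    rw [length_repeatLast hα.isWalk.1]
    omega
  refine ⟨repeatLast α, hα.repeatLast hrefl, hlen, ?_⟩
  rw [evenize_of_even hlen]
  exact homEqv_repeatLast_repeatLast hrefl hα.isWalk
end

section
/- Van Kampen theorem for graphs: suppose G = G₁ ∪ G₂ (G₁, G₂ subgraphs whose union of vertices and edges is G) and every diamond of G (induced 4-cycle / closed walk of length 4) is entirely contained in G₁ or in G₂. Then Π(G) is the pushout Π(G₁) *_{Π(G₁ ∩ G₂)} Π(G₂): for any groupoid R and functors φ₁: Π(G₁) → R and φ₂: Π(G₂) → R whose restrictions to Π(G₁ ∩ G₂) agree, there is a unique functor φ: Π(G) → R whose restrictions to Π(G₁) and Π(G₂) (along the inclusions) are φ₁ and φ₂. -/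
variable {V W X : Type}

open CategoryTheory

/-- A walk lying in the subgraph of `G` with vertex set `S` and edge relation `A`. -/
def IsWalkOn (S : Set V) (A : V → V → Prop) (l : List V) : Prop :=
  l ≠ [] ∧ (∀ u ∈ l, u ∈ S) ∧ l.Chain' A

/-- A walk from `x` to `y` lying in the subgraph `(S, A)`. -/
def IsWalkOnFrom (S : Set V) (A : V → V → Prop) (x y : V) (l : List V) : Prop :=
  (∀ u ∈ l, u ∈ S) ∧ l.Chain' A ∧ l.head? = some x ∧ l.getLast? = some y

/-- A prune step between walks of the subgraph `(S, A)`. -/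
def PruneStepOn (S : Set V) (A : V → V → Prop) (l m : List V) : Prop :=
  IsWalkOn S A l ∧ IsWalkOn S A m ∧ (PruneOf l m ∨ PruneOf m l)

/-- A spider move between walks of the subgraph `(S, A)`. -/
def SpiderStepOn (S : Set V) (A : V → V → Prop) (l m : List V) : Prop :=
  IsWalkOn S A l ∧ IsWalkOn S A m ∧ l.length = m.length ∧
    ∃ i : ℕ, 0 < i ∧ i + 1 < l.length ∧ ∀ j : ℕ, j ≠ i → l[j]? = m[j]?

/-- `≡` (prunes and spider moves) within the subgraph `(S, A)`. -/
def HomEqvOn (S : Set V) (A : V → V → Prop) : List V → List V → Prop :=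
  Relation.EqvGen (fun l m => PruneStepOn S A l m ∨ SpiderStepOn S A l m)

/-- A functor from the fundamental groupoid of the subgraph `(S, A)` to a groupoid
`R`: an assignment on vertices together with an assignment of arrows to walks that
sends length-0 walks to identities, concatenations to composites, and is constant on
`≡`-classes. -/
structure PiMapOn {V : Type} (S : Set V) (A : V → V → Prop) (R : Type*) [Groupoid R] where
  obj : V → R
  map : ∀ (x y : V) (l : List V), IsWalkOnFrom S A x y l → (obj x ⟶ obj y)
  map_id : ∀ (x : V) (h : IsWalkOnFrom S A x x [x]), map x x [x] h = 𝟙 (obj x)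
  map_comp : ∀ (x y z : V) (l m : List V) (hl : IsWalkOnFrom S A x y l)
    (hm : IsWalkOnFrom S A y z m) (h : IsWalkOnFrom S A x z (wconcat l m)),
    map x z (wconcat l m) h = map x y l hl ≫ map y z m hm
  map_eqv : ∀ (x y : V) (l m : List V) (hl : IsWalkOnFrom S A x y l)
    (hm : IsWalkOnFrom S A x y m), HomEqvOn S A l m → map x y l hl = map x y m hm

section

variable {R : Type*} [Groupoid R]

theorem Relation.EqvGen.dep_congr {α : Type*} {β : Sort*} {r : α → α → Prop} {P : α → Prop}
    (hP : ∀ a b, r a b → (P a ↔ P b)) (f : ∀ a, P a → β)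
    (hf : ∀ a b, r a b → ∀ ha hb, f a ha = f b hb) {a b : α} (hab : Relation.EqvGen r a b)
    (ha : P a) (hb : P b) : f a ha = f b hb := by
  have hP' : ∀ a b, Relation.EqvGen r a b → (P a ↔ P b) := fun a b h => by
    induction h with
    | rel a b h => exact hP a b h
    | refl => exact Iff.rfl
    | symm _ _ _ ih => exact ih.symm
    | trans _ _ _ _ _ ih₁ ih₂ => exact ih₁.trans ih₂
  induction hab with
  | rel a b h => exact hf a b h ha hb
  | refl => rfl
  | symm _ _ _ ih => exact (ih hb ha).symm
  | trans _ m _ ham _ ih₁ ih₂ =>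
    have hm := (hP' _ m ham).1 ha
    exact (ih₁ ha hm).trans (ih₂ hm hb)

lemma List.exists_eq_append_cons_cons_cons_of_getElem?_eq {α : Type*} {l m : List α} {i : ℕ}
    (hlen : l.length = m.length) (hi₀ : 0 < i) (hi : i + 1 < l.length)
    (hagree : ∀ j, j ≠ i → l[j]? = m[j]?) :
    ∃ p a b b' c s, l = p ++ a :: b :: c :: s ∧ m = p ++ a :: b' :: c :: s := by
  obtain ⟨k, rfl⟩ : ∃ k, i = k + 1 := ⟨i - 1, by omega⟩
  have hm : k + 2 < m.length := by omega
  have hsplit : ∀ (n : List α) (hn : k + 2 < n.length),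
      n = n.take k ++ n[k] :: n[k + 1] :: n[k + 2] :: n.drop (k + 3) := fun n hn => by
    rw [← List.drop_eq_getElem_cons, ← List.drop_eq_getElem_cons, ← List.drop_eq_getElem_cons,
      List.take_append_drop]
  have htake : m.take k = l.take k := List.ext_getElem? fun j => by
    simp only [List.getElem?_take]
    split_ifs with hj
    · exact (hagree j (by omega)).symm
    · rfl
  have hdrop : m.drop (k + 3) = l.drop (k + 3) := List.ext_getElem? fun j => by
    simp only [List.getElem?_drop]
    exact (hagree _ (by omega)).symm
  have hget : ∀ j (hjl : j < l.length) (hjm : j < m.length), j ≠ k + 1 → m[j] = l[j] :=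
    fun j hjl hjm hj => by simpa [hjl, hjm] using (hagree j hj).symm
  refine ⟨l.take k, l[k], l[k + 1], m[k + 1], l[k + 2], l.drop (k + 3), hsplit l hi,
    (hsplit m hm).trans ?_⟩
  rw [htake, hdrop, hget k (by omega) (by omega) (by omega), hget (k + 2) hi hm (by omega)]

section Walks

variable {S : Set V} {A : V → V → Prop} {x y z a b : V} {l m p s t : List V}

lemma isWalkOnFrom_iff :
    IsWalkOnFrom S A x y l ↔ IsWalkOn S A l ∧ l.head? = some x ∧ l.getLast? = some y := by
  refine ⟨fun ⟨hS, hA, hx, hy⟩ => ⟨⟨?_, hS, hA⟩, hx, hy⟩,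
    fun ⟨⟨_, hS, hA⟩, hx, hy⟩ => ⟨hS, hA, hx, hy⟩⟩
  rintro rfl
  simp at hx

lemma IsWalkOnFrom.isWalkOn (h : IsWalkOnFrom S A x y l) : IsWalkOn S A l :=
  (isWalkOnFrom_iff.1 h).1

lemma IsWalkOnFrom.left_mem (h : IsWalkOnFrom S A x y l) : x ∈ S :=
  h.1 x (List.mem_of_mem_head? h.2.2.1)

lemma IsWalkOnFrom.right_mem (h : IsWalkOnFrom S A x y l) : y ∈ S :=
  h.1 y (List.mem_of_mem_getLast? h.2.2.2)

lemma isWalkOnFrom_singleton_iff : IsWalkOnFrom S A x y [a] ↔ a ∈ S ∧ a = x ∧ a = y := by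
  simp [IsWalkOnFrom, List.Chain']

lemma isWalkOnFrom_cons_cons_iff :
    IsWalkOnFrom S A x y (a :: b :: t) ↔
      a = x ∧ a ∈ S ∧ A a b ∧ IsWalkOnFrom S A b y (b :: t) := by
  simp only [IsWalkOnFrom, List.Chain', List.isChain_cons_cons, List.mem_cons, forall_eq_or_imp,
    List.head?_cons, Option.some.injEq, List.getLast?_cons_cons, true_and]
  tauto

lemma isWalkOnFrom_pair_iff : IsWalkOnFrom S A a b [a, b] ↔ a ∈ S ∧ b ∈ S ∧ A a b := by
  simp [isWalkOnFrom_cons_cons_iff, isWalkOnFrom_singleton_iff, and_comm]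

lemma isWalkOnFrom_pair_symm (hA : Symmetric A) (h : IsWalkOnFrom S A a b [a, b]) :
    IsWalkOnFrom S A b a [b, a] := by
  obtain ⟨ha, hb, hab⟩ := isWalkOnFrom_pair_iff.1 h
  exact isWalkOnFrom_pair_iff.2 ⟨hb, ha, hA hab⟩

lemma isWalkOnFrom_sides_of_diamond {c b' : V} (hA : Symmetric A)
    (hS : ∀ x ∈ [a, b, c, b', a], x ∈ S) (hd : [a, b, c, b', a].Chain' A) :
    IsWalkOnFrom S A a b [a, b] ∧ IsWalkOnFrom S A b c [b, c] ∧
      IsWalkOnFrom S A a b' [a, b'] ∧ IsWalkOnFrom S A b' c [b', c] := by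
  simp only [List.Chain', List.isChain_cons_cons, List.isChain_singleton, and_true] at hd
  simp only [List.mem_cons, List.not_mem_nil, or_false, forall_eq_or_imp, forall_eq] at hS
  simp only [isWalkOnFrom_pair_iff, hS, hd, hA hd.2.2.1, hA hd.2.2.2, and_self]

lemma isWalkOnFrom_append_cons_iff :
    IsWalkOnFrom S A x z (p ++ y :: s) ↔
      IsWalkOnFrom S A x y (p ++ [y]) ∧ IsWalkOnFrom S A y z (y :: s) := by
  have hhead : (p ++ y :: s).head? = (p ++ [y]).head? := by cases p <;> rfl
  unfold IsWalkOnFrom List.Chain'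
  rw [List.isChain_split, hhead, List.getLast?_append_cons, List.getLast?_append_cons]
  simp only [List.mem_append, List.mem_cons, List.getLast?_singleton, List.head?_cons]
  grind

lemma isWalkOnFrom_iff_of_step (h : PruneStepOn S A l m ∨ SpiderStepOn S A l m) :
    IsWalkOnFrom S A x y l ↔ IsWalkOnFrom S A x y m := by
  have hwalks : IsWalkOn S A l ∧ IsWalkOn S A m := by
    rcases h with ⟨hl, hm, -⟩ | ⟨hl, hm, -⟩ <;> exact ⟨hl, hm⟩
  have hends : l.head? = m.head? ∧ l.getLast? = m.getLast? := by
    rcases h with ⟨-, -, ⟨p, s, a, b, rfl, rfl⟩ | ⟨p, s, a, b, rfl, rfl⟩⟩ |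
      ⟨-, -, hlen, i, hi₀, hi, hagree⟩
    · simp
    · simp
    · obtain ⟨p, a, b, b', c, s, rfl, rfl⟩ :=
        List.exists_eq_append_cons_cons_cons_of_getElem?_eq hlen hi₀ hi hagree
      simp
  rw [isWalkOnFrom_iff, isWalkOnFrom_iff, hends.1, hends.2]
  simp only [hwalks, true_and]

end Walks

section OfEdges

variable {S : Set V} {A : V → V → Prop} (obj : V → R) (e : ∀ u w, A u w → (obj u ⟶ obj w))
  {x y z a b : V} {l m p s t : List V}

def walkComp : ∀ (l : List V) (x y : V), IsWalkOnFrom S A x y l → (obj x ⟶ obj y)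
  | [], _, _, h => nomatch h.2.2.1
  | [_], _, _, h => eqToHom <| by obtain ⟨-, rfl, rfl⟩ := isWalkOnFrom_singleton_iff.1 h; rfl
  | a :: b :: t, _, y, h =>
    have h' := isWalkOnFrom_cons_cons_iff.1 h
    eqToHom (congrArg obj h'.1.symm) ≫ e a b h'.2.2.1 ≫ walkComp (b :: t) b y h'.2.2.2

lemma walkComp_singleton (h : IsWalkOnFrom S A x x [x]) :
    walkComp obj e [x] x x h = 𝟙 (obj x) :=
  rfl

lemma walkComp_cons_cons (hab : A a b) (h : IsWalkOnFrom S A a y (a :: b :: t))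
    (ht : IsWalkOnFrom S A b y (b :: t)) :
    walkComp obj e (a :: b :: t) a y h = e a b hab ≫ walkComp obj e (b :: t) b y ht :=
  Category.id_comp _

lemma walkComp_congr (hl : l = m) (h : IsWalkOnFrom S A x y l) :
    walkComp obj e l x y h = walkComp obj e m x y (hl ▸ h) := by
  subst hl
  rfl

theorem walkComp_wconcat : ∀ {l m : List V} {x y z : V} (hl : IsWalkOnFrom S A x y l)
    (hm : IsWalkOnFrom S A y z m) (h : IsWalkOnFrom S A x z (wconcat l m)),
    walkComp obj e (wconcat l m) x z h = walkComp obj e l x y hl ≫ walkComp obj e m y z hm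
  | [], _, _, _, _, hl, _, _ => nomatch hl.2.2.1
  | [_], m, _, _, _, hl, hm, _ => by
    obtain ⟨-, rfl, rfl⟩ := isWalkOnFrom_singleton_iff.1 hl
    obtain _ | ⟨c, m⟩ := m
    · nomatch hm.2.2.1
    obtain rfl := Option.some.inj hm.2.2.1
    exact (Category.id_comp _).symm
  | a :: b :: t, m, _, _, _, hl, hm, h => by
    obtain ⟨rfl, -, hab, hl'⟩ := isWalkOnFrom_cons_cons_iff.1 hl
    have h' : IsWalkOnFrom S A b _ (wconcat (b :: t) m) :=
      (isWalkOnFrom_cons_cons_iff.1 h).2.2.2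
    refine (walkComp_cons_cons (t := t ++ m.tail) obj e hab h h').trans ?_
    rw [walkComp_cons_cons obj e hab hl hl', Category.assoc]
    exact congrArg (e a b hab ≫ ·) (walkComp_wconcat hl' hm h')

lemma walkComp_append_cons (h : IsWalkOnFrom S A x z (p ++ y :: s))
    (h₁ : IsWalkOnFrom S A x y (p ++ [y])) (h₂ : IsWalkOnFrom S A y z (y :: s)) :
    walkComp obj e (p ++ y :: s) x z h =
      walkComp obj e (p ++ [y]) x y h₁ ≫ walkComp obj e (y :: s) y z h₂ :=
  (walkComp_congr obj e (by simp [wconcat]) h).trans (walkComp_wconcat obj e h₁ h₂ _)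

variable
  (he_backtrack : ∀ u w (huw : A u w) (hwu : A w u), e u w huw ≫ e w u hwu = 𝟙 (obj u))
  (he_square : ∀ a b c b' (hab : A a b) (hbc : A b c) (hab' : A a b') (hb'c : A b' c),
    e a b hab ≫ e b c hbc = e a b' hab' ≫ e b' c hb'c)

include he_backtrack in
lemma walkComp_eq_of_pruneOf (hpr : PruneOf l m) (hl : IsWalkOnFrom S A x y l)
    (hm : IsWalkOnFrom S A x y m) : walkComp obj e l x y hl = walkComp obj e m x y hm := by
  obtain ⟨p, s, a, b, rfl, rfl⟩ := hpr
  obtain ⟨hp, hl'⟩ := isWalkOnFrom_append_cons_iff.1 hl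
  obtain ⟨-, hm'⟩ := isWalkOnFrom_append_cons_iff.1 hm
  obtain ⟨-, -, hab, hbas⟩ := isWalkOnFrom_cons_cons_iff.1 hl'
  obtain ⟨-, -, hba, -⟩ := isWalkOnFrom_cons_cons_iff.1 hbas
  rw [walkComp_append_cons obj e hl hp hl', walkComp_append_cons obj e hm hp hm',
    walkComp_cons_cons obj e hab hl' hbas, walkComp_cons_cons obj e hba hbas hm',
    reassoc_of% he_backtrack a b hab hba]

include he_square in
lemma walkComp_eq_of_spider {b' c : V} (hl : IsWalkOnFrom S A x y (p ++ a :: b :: c :: s))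
    (hm : IsWalkOnFrom S A x y (p ++ a :: b' :: c :: s)) :
    walkComp obj e _ x y hl = walkComp obj e _ x y hm := by
  obtain ⟨hp, hl'⟩ := isWalkOnFrom_append_cons_iff.1 hl
  obtain ⟨-, hm'⟩ := isWalkOnFrom_append_cons_iff.1 hm
  obtain ⟨-, -, hab, hbcs⟩ := isWalkOnFrom_cons_cons_iff.1 hl'
  obtain ⟨-, -, hbc, hcs⟩ := isWalkOnFrom_cons_cons_iff.1 hbcs
  obtain ⟨-, -, hab', hb'cs⟩ := isWalkOnFrom_cons_cons_iff.1 hm'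
  obtain ⟨-, -, hb'c, -⟩ := isWalkOnFrom_cons_cons_iff.1 hb'cs
  rw [walkComp_append_cons obj e hl hp hl', walkComp_append_cons obj e hm hp hm',
    walkComp_cons_cons obj e hab hl' hbcs, walkComp_cons_cons obj e hbc hbcs hcs,
    walkComp_cons_cons obj e hab' hm' hb'cs, walkComp_cons_cons obj e hb'c hb'cs hcs,
    reassoc_of% he_square a b c b' hab hbc hab' hb'c]

include he_backtrack he_square in
lemma walkComp_eq_of_step (hs : PruneStepOn S A l m ∨ SpiderStepOn S A l m)
    (hl : IsWalkOnFrom S A x y l) (hm : IsWalkOnFrom S A x y m) :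
    walkComp obj e l x y hl = walkComp obj e m x y hm := by
  rcases hs with ⟨-, -, hpr | hpr⟩ | ⟨-, -, hlen, i, hi₀, hi, hagree⟩
  · exact walkComp_eq_of_pruneOf obj e he_backtrack hpr hl hm
  · exact (walkComp_eq_of_pruneOf obj e he_backtrack hpr hm hl).symm
  · obtain ⟨p, a, b, b', c, s, rfl, rfl⟩ :=
      List.exists_eq_append_cons_cons_cons_of_getElem?_eq hlen hi₀ hi hagree
    exact walkComp_eq_of_spider obj e he_square hl hm

def PiMapOn.ofEdges : PiMapOn S A R where
  obj := obj
  map x y l := walkComp obj e l x y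
  map_id _ := walkComp_singleton obj e
  map_comp _ _ _ _ _ := walkComp_wconcat obj e
  map_eqv x y _ _ hl hm h :=
    h.dep_congr (fun _ _ hs => isWalkOnFrom_iff_of_step hs) (fun l hl => walkComp obj e l x y hl)
      (fun _ _ hs => walkComp_eq_of_step obj e he_backtrack he_square hs) hl hm

lemma PiMapOn.ofEdges_map_pair (hab : A a b) (h : IsWalkOnFrom S A a b [a, b]) :
    (PiMapOn.ofEdges obj e he_backtrack he_square).map a b [a, b] h = e a b hab :=
  (walkComp_cons_cons obj e hab h (isWalkOnFrom_singleton_iff.2 ⟨h.right_mem, rfl, rfl⟩)).trans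
    (Category.comp_id _)

end OfEdges

namespace PiMapOn

variable {S S' : Set V} {A A' : V → V → Prop} {a b c b' x y : V} {t : List V}

lemma map_cons_cons (F : PiMapOn S A R) (h : IsWalkOnFrom S A a y (a :: b :: t))
    (hab : IsWalkOnFrom S A a b [a, b]) (ht : IsWalkOnFrom S A b y (b :: t)) :
    F.map a y (a :: b :: t) h = F.map a b [a, b] hab ≫ F.map b y (b :: t) ht :=
  F.map_comp a b y [a, b] (b :: t) hab ht h

lemma map_backtrack (F : PiMapOn S A R) (hab : IsWalkOnFrom S A a b [a, b])
    (hba : IsWalkOnFrom S A b a [b, a]) :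
    F.map a b [a, b] hab ≫ F.map b a [b, a] hba = 𝟙 (F.obj a) := by
  have haba : IsWalkOnFrom S A a a [a, b, a] :=
    isWalkOnFrom_cons_cons_iff.2 ⟨rfl, hab.left_mem, (isWalkOnFrom_pair_iff.1 hab).2.2, hba⟩
  have ha : IsWalkOnFrom S A a a [a] := isWalkOnFrom_singleton_iff.2 ⟨hab.left_mem, rfl, rfl⟩
  rw [← F.map_cons_cons haba hab hba, ← F.map_id a ha]
  exact F.map_eqv a a _ _ haba ha
    (.rel _ _ (.inl ⟨haba.isWalkOn, ha.isWalkOn, .inl ⟨[], [], a, b, rfl, rfl⟩⟩))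

lemma map_square (F : PiMapOn S A R) (hab : IsWalkOnFrom S A a b [a, b])
    (hbc : IsWalkOnFrom S A b c [b, c]) (hab' : IsWalkOnFrom S A a b' [a, b'])
    (hb'c : IsWalkOnFrom S A b' c [b', c]) :
    F.map a b [a, b] hab ≫ F.map b c [b, c] hbc =
      F.map a b' [a, b'] hab' ≫ F.map b' c [b', c] hb'c := by
  have habc : IsWalkOnFrom S A a c [a, b, c] :=
    isWalkOnFrom_cons_cons_iff.2 ⟨rfl, hab.left_mem, (isWalkOnFrom_pair_iff.1 hab).2.2, hbc⟩
  have hab'c : IsWalkOnFrom S A a c [a, b', c] :=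
    isWalkOnFrom_cons_cons_iff.2 ⟨rfl, hab.left_mem, (isWalkOnFrom_pair_iff.1 hab').2.2, hb'c⟩
  rw [← F.map_cons_cons habc hab hbc, ← F.map_cons_cons hab'c hab' hb'c]
  refine F.map_eqv a c _ _ habc hab'c
    (.rel _ _ (.inr ⟨habc.isWalkOn, hab'c.isWalkOn, rfl, 1, one_pos, by simp, fun j hj => ?_⟩))
  rcases j with _ | _ | _ | j <;> simp_all

def transport (F : PiMapOn S A R) (obj : V → R) (hobj : ∀ x ∈ S, obj x = F.obj x) :
    PiMapOn S A R where
  obj := obj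
  map x y l h := eqToHom (hobj x h.left_mem) ≫ F.map x y l h ≫ eqToHom (hobj y h.right_mem).symm
  map_id x h := by rw [F.map_id x h]; simp
  map_comp x y z l m hl hm h := by rw [F.map_comp x y z l m hl hm h]; simp
  map_eqv x y l m hl hm h := by rw [F.map_eqv x y l m hl hm h]

def RestrictsTo (F : PiMapOn S A R) (F' : PiMapOn S' A' R) : Prop :=
  (∀ x ∈ S', F.obj x = F'.obj x) ∧
    ∀ (x y : V) (l : List V) (h' : IsWalkOnFrom S' A' x y l) (h : IsWalkOnFrom S A x y l)
      (ex : F.obj x = F'.obj x) (ey : F.obj y = F'.obj y),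
      F.map x y l h = eqToHom ex ≫ F'.map x y l h' ≫ eqToHom ey.symm

theorem restrictsTo_of_map_pair (F : PiMapOn S A R) (F' : PiMapOn S' A' R)
    (hobj : ∀ x ∈ S', F.obj x = F'.obj x)
    (hpair : ∀ (a b : V) (h' : IsWalkOnFrom S' A' a b [a, b]) (h : IsWalkOnFrom S A a b [a, b])
      (ea : F.obj a = F'.obj a) (eb : F.obj b = F'.obj b),
      F.map a b [a, b] h = eqToHom ea ≫ F'.map a b [a, b] h' ≫ eqToHom eb.symm) :
    F.RestrictsTo F' := by
  refine ⟨hobj, fun x y l => ?_⟩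
  induction l generalizing x with
  | nil => exact fun h' => nomatch h'.2.2.1
  | cons a t ih =>
    intro h' h ex ey
    cases t with
    | nil =>
      obtain ⟨-, rfl, rfl⟩ := isWalkOnFrom_singleton_iff.1 h
      simp [F.map_id, F'.map_id]
    | cons b t =>
      obtain ⟨rfl, ha, hab, ht⟩ := isWalkOnFrom_cons_cons_iff.1 h
      obtain ⟨-, ha', hab', ht'⟩ := isWalkOnFrom_cons_cons_iff.1 h'
      have hab₁ := isWalkOnFrom_pair_iff.2 ⟨ha, ht.left_mem, hab⟩
      have hab₁' := isWalkOnFrom_pair_iff.2 ⟨ha', ht'.left_mem, hab'⟩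
      have eb := hobj b ht'.left_mem
      rw [F.map_cons_cons h hab₁ ht, F'.map_cons_cons h' hab₁' ht', hpair a b hab₁' hab₁ ex eb,
        ih b ht' ht eb ey]
      simp

lemma ext_of_restrictsTo {F F' : PiMapOn S A R} (hobj : F.obj = F'.obj)
    (hF : F.RestrictsTo F') : F = F' := by
  cases F with | mk obj map =>
  cases F' with | mk obj' map' =>
  obtain rfl : obj = obj' := hobj
  obtain rfl : map = map' := by
    funext x y l h
    simpa using hF.2 x y l h h rfl rfl
  rfl

lemma RestrictsTo.map_eq {F F' : PiMapOn S A R} {G : PiMapOn S' A' R} (hF : F.RestrictsTo G)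
    (hF' : F'.RestrictsTo G) {l : List V} (hG : IsWalkOnFrom S' A' x y l)
    (h : IsWalkOnFrom S A x y l) (h' : IsWalkOnFrom S A x y l) (ex : F.obj x = F'.obj x)
    (ey : F.obj y = F'.obj y) :
    F.map x y l h = eqToHom ex ≫ F'.map x y l h' ≫ eqToHom ey.symm := by
  rw [hF.2 x y l hG h (hF.1 x hG.left_mem) (hF.1 y hG.right_mem),
    hF'.2 x y l hG h' (hF'.1 x hG.left_mem) (hF'.1 y hG.right_mem)]
  simp

theorem eq_of_restrictsTo {S₁ S₂ : Set V} {A₁ A₂ : V → V → Prop} {F F' : PiMapOn S A R}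
    {F₁ : PiMapOn S₁ A₁ R} {F₂ : PiMapOn S₂ A₂ R} (hS : S₁ ∪ S₂ = Set.univ)
    (hedge : ∀ a b, IsWalkOnFrom S A a b [a, b] →
      IsWalkOnFrom S₁ A₁ a b [a, b] ∨ IsWalkOnFrom S₂ A₂ a b [a, b])
    (hF₁ : F.RestrictsTo F₁) (hF₂ : F.RestrictsTo F₂) (hF₁' : F'.RestrictsTo F₁)
    (hF₂' : F'.RestrictsTo F₂) : F = F' := by
  have hobj : F.obj = F'.obj := funext fun x => by
    rcases (hS ▸ Set.mem_univ x : x ∈ S₁ ∪ S₂) with hx | hx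
    · exact (hF₁.1 x hx).trans (hF₁'.1 x hx).symm
    · exact (hF₂.1 x hx).trans (hF₂'.1 x hx).symm
  refine ext_of_restrictsTo hobj
    (restrictsTo_of_map_pair F F' (fun x _ => congrFun hobj x) fun a b h' h ea eb => ?_)
  rcases hedge a b h with hG | hG
  · exact hF₁.map_eq hF₁' hG h h' ea eb
  · exact hF₂.map_eq hF₂' hG h h' ea eb

end PiMapOn

section Glue

variable {G : LoopGraph V} {S₁ S₂ : Set V} {A₁ A₂ : V → V → Prop}
  (F₁ : PiMapOn S₁ A₁ R) (F₂ : PiMapOn S₂ A₂ R) {u w : V}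

open Classical in
noncomputable def glueObj (x : V) : R := if x ∈ S₁ then F₁.obj x else F₂.obj x

lemma glueObj_of_mem_left {x : V} (hx : x ∈ S₁) : glueObj F₁ F₂ x = F₁.obj x := if_pos hx

/-- `F₁` re-indexed by the object map `glueObj` (as is `F₂` in `glueRight`), so that the edge
arrows of both live in the same hom-types and can be mixed in `glueEdge`. -/
noncomputable def glueLeft : PiMapOn S₁ A₁ R :=
  F₁.transport (glueObj F₁ F₂) fun _ => glueObj_of_mem_left F₁ F₂

variable {F₁ F₂} (hobj : ∀ x ∈ S₁ ∩ S₂, F₁.obj x = F₂.obj x)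

include hobj in
lemma glueObj_of_mem_right {x : V} (hx : x ∈ S₂) : glueObj F₁ F₂ x = F₂.obj x := by
  by_cases hx₁ : x ∈ S₁
  · exact (if_pos hx₁).trans (hobj x ⟨hx₁, hx⟩)
  · exact if_neg hx₁

noncomputable def glueRight : PiMapOn S₂ A₂ R :=
  F₂.transport (glueObj F₁ F₂) fun _ => glueObj_of_mem_right hobj

variable
  (hedge : ∀ u w, G.Adj u w → IsWalkOnFrom S₁ A₁ u w [u, w] ∨ IsWalkOnFrom S₂ A₂ u w [u, w])

open Classical in
noncomputable def glueEdge (u w : V) (h : G.Adj u w) : glueObj F₁ F₂ u ⟶ glueObj F₁ F₂ w :=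
  if h₁ : IsWalkOnFrom S₁ A₁ u w [u, w] then (glueLeft F₁ F₂).map u w [u, w] h₁
  else (glueRight hobj).map u w [u, w] ((hedge u w h).resolve_left h₁)

lemma glueEdge_eq_left (h : G.Adj u w) (h₁ : IsWalkOnFrom S₁ A₁ u w [u, w]) :
    glueEdge hobj hedge u w h = (glueLeft F₁ F₂).map u w [u, w] h₁ :=
  dif_pos h₁

variable (hmap : ∀ (x y : V) (l : List V),
  IsWalkOnFrom (S₁ ∩ S₂) (fun u w => A₁ u w ∧ A₂ u w) x y l →
  ∀ (h₁ : IsWalkOnFrom S₁ A₁ x y l) (h₂ : IsWalkOnFrom S₂ A₂ x y l)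
    (ex : F₁.obj x = F₂.obj x) (ey : F₁.obj y = F₂.obj y),
    F₁.map x y l h₁ = eqToHom ex ≫ F₂.map x y l h₂ ≫ eqToHom ey.symm)

include hmap in
lemma glueEdge_eq_right (h : G.Adj u w) (h₂ : IsWalkOnFrom S₂ A₂ u w [u, w]) :
    glueEdge hobj hedge u w h = (glueRight hobj).map u w [u, w] h₂ := by
  by_cases h₁ : IsWalkOnFrom S₁ A₁ u w [u, w]
  · have hu : u ∈ S₁ ∩ S₂ := ⟨h₁.left_mem, h₂.left_mem⟩
    have hw : w ∈ S₁ ∩ S₂ := ⟨h₁.right_mem, h₂.right_mem⟩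
    have h₁₂ : IsWalkOnFrom (S₁ ∩ S₂) (fun u w => A₁ u w ∧ A₂ u w) u w [u, w] :=
      isWalkOnFrom_pair_iff.2 ⟨hu, hw, (isWalkOnFrom_pair_iff.1 h₁).2.2,
        (isWalkOnFrom_pair_iff.1 h₂).2.2⟩
    rw [glueEdge_eq_left hobj hedge h h₁]
    simp [glueLeft, glueRight, PiMapOn.transport,
      hmap u w [u, w] h₁₂ h₁ h₂ (hobj u hu) (hobj w hw)]
  · exact dif_neg h₁

variable (hA₁ : Symmetric A₁) (hA₂ : Symmetric A₂)

include hmap hA₁ hA₂ in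
lemma glueEdge_backtrack (huw : G.Adj u w) (hwu : G.Adj w u) :
    glueEdge hobj hedge u w huw ≫ glueEdge hobj hedge w u hwu = 𝟙 (glueObj F₁ F₂ u) := by
  rcases hedge u w huw with h₁ | h₂
  · rw [glueEdge_eq_left hobj hedge huw h₁,
      glueEdge_eq_left hobj hedge hwu (isWalkOnFrom_pair_symm hA₁ h₁)]
    exact (glueLeft F₁ F₂).map_backtrack h₁ _
  · rw [glueEdge_eq_right hobj hedge hmap huw h₂,
      glueEdge_eq_right hobj hedge hmap hwu (isWalkOnFrom_pair_symm hA₂ h₂)]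
    exact (glueRight hobj).map_backtrack h₂ _

variable (hdiamond : ∀ (u : V) (d : List V), IsWalkOnFrom Set.univ G.Adj u u d →
  d.length = 5 → ((∀ x ∈ d, x ∈ S₁) ∧ d.Chain' A₁) ∨ ((∀ x ∈ d, x ∈ S₂) ∧ d.Chain' A₂))

include hmap hA₁ hA₂ hdiamond in
lemma glueEdge_square {a b c b' : V} (hab : G.Adj a b) (hbc : G.Adj b c) (hab' : G.Adj a b')
    (hb'c : G.Adj b' c) :
    glueEdge hobj hedge a b hab ≫ glueEdge hobj hedge b c hbc =
      glueEdge hobj hedge a b' hab' ≫ glueEdge hobj hedge b' c hb'c := by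
  have hd : IsWalkOnFrom Set.univ G.Adj a a [a, b, c, b', a] := by
    simp [isWalkOnFrom_cons_cons_iff, isWalkOnFrom_singleton_iff, hab, hbc, G.symm hb'c,
      G.symm hab']
  rcases hdiamond a _ hd rfl with ⟨hS, hA⟩ | ⟨hS, hA⟩
  · obtain ⟨h₁, h₂, h₃, h₄⟩ := isWalkOnFrom_sides_of_diamond hA₁ hS hA
    rw [glueEdge_eq_left hobj hedge hab h₁, glueEdge_eq_left hobj hedge hbc h₂,
      glueEdge_eq_left hobj hedge hab' h₃, glueEdge_eq_left hobj hedge hb'c h₄]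
    exact (glueLeft F₁ F₂).map_square h₁ h₂ h₃ h₄
  · obtain ⟨h₁, h₂, h₃, h₄⟩ := isWalkOnFrom_sides_of_diamond hA₂ hS hA
    rw [glueEdge_eq_right hobj hedge hmap hab h₁, glueEdge_eq_right hobj hedge hmap hbc h₂,
      glueEdge_eq_right hobj hedge hmap hab' h₃, glueEdge_eq_right hobj hedge hmap hb'c h₄]
    exact (glueRight hobj).map_square h₁ h₂ h₃ h₄

noncomputable def glue : PiMapOn Set.univ G.Adj R :=
  PiMapOn.ofEdges (glueObj F₁ F₂) (glueEdge hobj hedge)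
    (fun _ _ => glueEdge_backtrack hobj hedge hmap hA₁ hA₂)
    (fun _ _ _ _ => glueEdge_square hobj hedge hmap hA₁ hA₂ hdiamond)

lemma glue_restrictsTo_left : (glue hobj hedge hmap hA₁ hA₂ hdiamond).RestrictsTo F₁ :=
  PiMapOn.restrictsTo_of_map_pair _ F₁ (fun _ => glueObj_of_mem_left F₁ F₂) fun _ _ h₁ h _ _ =>
    (PiMapOn.ofEdges_map_pair _ _ _ _ (isWalkOnFrom_pair_iff.1 h).2.2 h).trans
      (glueEdge_eq_left hobj hedge _ h₁)

lemma glue_restrictsTo_right : (glue hobj hedge hmap hA₁ hA₂ hdiamond).RestrictsTo F₂ :=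
  PiMapOn.restrictsTo_of_map_pair _ F₂ (fun _ => glueObj_of_mem_right hobj) fun _ _ h₂ h _ _ =>
    (PiMapOn.ofEdges_map_pair _ _ _ _ (isWalkOnFrom_pair_iff.1 h).2.2 h).trans
      (glueEdge_eq_right hobj hedge hmap _ h₂)

end Glue

end

/-- van Kampen: if `G = G₁ ∪ G₂` (subgraphs `Gᵢ = (Sᵢ, Aᵢ)` whose
vertex and edge sets cover those of `G`) and every diamond (closed walk of length 4)
of `G` lies entirely in `G₁` or in `G₂`, then `Π(G)` is the pushout
`Π(G₁) *_{Π(G₁ ∩ G₂)} Π(G₂)`: for any groupoid `R` and functors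
`F₁ : Π(G₁) → R`, `F₂ : Π(G₂) → R` agreeing on `Π(G₁ ∩ G₂)`, there is a unique
functor `F : Π(G) → R` restricting to `F₁` and `F₂`. -/
theorem stmt17 {V : Type} (G : LoopGraph V) (S₁ S₂ : Set V) (A₁ A₂ : V → V → Prop)
    (hA₁S : ∀ u w : V, A₁ u w → u ∈ S₁ ∧ w ∈ S₁)
    (hA₂S : ∀ u w : V, A₂ u w → u ∈ S₂ ∧ w ∈ S₂)
    (hA₁symm : Symmetric A₁) (hA₂symm : Symmetric A₂)
    (hScover : S₁ ∪ S₂ = Set.univ)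
    (hAcover : ∀ u w : V, G.Adj u w ↔ (A₁ u w ∨ A₂ u w))
    (hdiamond : ∀ (u : V) (d : List V),
      IsWalkOnFrom Set.univ G.Adj u u d → d.length = 5 →
      ((∀ x ∈ d, x ∈ S₁) ∧ d.Chain' A₁) ∨ ((∀ x ∈ d, x ∈ S₂) ∧ d.Chain' A₂))
    (R : Type*) [Groupoid R]
    (F₁ : PiMapOn S₁ A₁ R) (F₂ : PiMapOn S₂ A₂ R)
    (hobj : ∀ x ∈ S₁ ∩ S₂, F₁.obj x = F₂.obj x)
    (hmap : ∀ (x y : V) (l : List V),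
      IsWalkOnFrom (S₁ ∩ S₂) (fun u w => A₁ u w ∧ A₂ u w) x y l →
      ∀ (h₁ : IsWalkOnFrom S₁ A₁ x y l) (h₂ : IsWalkOnFrom S₂ A₂ x y l)
        (ex : F₁.obj x = F₂.obj x) (ey : F₁.obj y = F₂.obj y),
        F₁.map x y l h₁ = eqToHom ex ≫ F₂.map x y l h₂ ≫ eqToHom ey.symm) :
    ∃! F : PiMapOn Set.univ G.Adj R,
      (∀ x ∈ S₁, F.obj x = F₁.obj x) ∧
      (∀ x ∈ S₂, F.obj x = F₂.obj x) ∧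
      (∀ (x y : V) (l : List V) (h₁ : IsWalkOnFrom S₁ A₁ x y l)
        (h : IsWalkOnFrom Set.univ G.Adj x y l)
        (ex : F.obj x = F₁.obj x) (ey : F.obj y = F₁.obj y),
        F.map x y l h = eqToHom ex ≫ F₁.map x y l h₁ ≫ eqToHom ey.symm) ∧
      (∀ (x y : V) (l : List V) (h₂ : IsWalkOnFrom S₂ A₂ x y l)
        (h : IsWalkOnFrom Set.univ G.Adj x y l)
        (ex : F.obj x = F₂.obj x) (ey : F.obj y = F₂.obj y),
        F.map x y l h = eqToHom ex ≫ F₂.map x y l h₂ ≫ eqToHom ey.symm) := by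
  have hedge (u w : V) (h : G.Adj u w) :
      IsWalkOnFrom S₁ A₁ u w [u, w] ∨ IsWalkOnFrom S₂ A₂ u w [u, w] :=
    ((hAcover u w).1 h).imp
      (fun h₁ => isWalkOnFrom_pair_iff.2 ⟨(hA₁S u w h₁).1, (hA₁S u w h₁).2, h₁⟩)
      (fun h₂ => isWalkOnFrom_pair_iff.2 ⟨(hA₂S u w h₂).1, (hA₂S u w h₂).2, h₂⟩)
  have hF₁ := glue_restrictsTo_left hobj hedge hmap hA₁symm hA₂symm hdiamond
  have hF₂ := glue_restrictsTo_right hobj hedge hmap hA₁symm hA₂symm hdiamond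
  refine ⟨_, ⟨hF₁.1, hF₂.1, hF₁.2, hF₂.2⟩, fun F ⟨hF₁obj, hF₂obj, hF₁map, hF₂map⟩ => ?_⟩
  exact PiMapOn.eq_of_restrictsTo hScover
    (fun a b h => hedge a b (isWalkOnFrom_pair_iff.1 h).2.2)
    ⟨hF₁obj, hF₁map⟩ ⟨hF₂obj, hF₂map⟩ hF₁ hF₂
end

section
/- If f: G → G is a fold, i.e., f and the identity of G agree on every vertex except a single vertex x, and f(x) ∼ x whenever x ∼ x, then f, viewed as a morphism from G onto its image subgraph Im(f), is a ×-homotopy equivalence: with i: Im(f) → G the inclusion, f∘i ≃ id_{Im(f)} and i∘f ≃ id_G. -/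
variable {V W X : Type}

/-- The image subgraph of an endomorphism `f : G → G`: vertices the range of `f`,
edges the images of edges of `G`. -/
def imageGraph (G : LoopGraph V) (f : V → V) : LoopGraph (Set.range f) where
  Adj a b := ∃ u w : V, G.Adj u w ∧ f u = a.1 ∧ f w = b.1
  symm := fun _ _ ⟨u, w, h, hu, hw⟩ => ⟨w, u, G.symm h, hw, hu⟩

/-!
A fold moves only `x₀`, and moves it to a vertex adjacent to every neighbour of `x₀`
(including `x₀` itself when it is looped). Hence `f u ∼ v` for every edge `u ∼ v`, which is
exactly a one-step ×-homotopy from `f` to the identity, both on `G` and on `Im(f)`.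
-/

theorem IsHom.id (G : LoopGraph V) : IsHom G G id := fun h => h

theorem isHom_rangeRestrict_imageGraph (G : LoopGraph V) (f : V → V) :
    IsHom G (imageGraph G f) (fun v => ⟨f v, v, rfl⟩) :=
  fun {u v} h => ⟨u, v, h, rfl, rfl⟩

theorem IsHom.imageGraph_val {G : LoopGraph V} {f : V → V} (hf : IsHom G G f) :
    IsHom (imageGraph G f) G Subtype.val := by
  rintro ⟨_, _⟩ ⟨_, _⟩ ⟨u, w, h, rfl, rfl⟩
  exact hf h

theorem Homotopic.of_adj {G : LoopGraph V} {H : LoopGraph W} {f g : V → W}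
    (hf : IsHom G H f) (hg : IsHom G H g) (hfg : ∀ u v, G.Adj u v → H.Adj (f u) (g v)) :
    Homotopic G H f g :=
  Relation.ReflTransGen.single ⟨hf, hg, hfg⟩

structure IsFold (G : LoopGraph V) (f : V → V) (x₀ : V) : Prop where
  isHom : IsHom G G f
  eq_of_ne : ∀ u, u ≠ x₀ → f u = u
  adj_of_loop : G.Adj x₀ x₀ → G.Adj (f x₀) x₀

namespace IsFold

variable {G : LoopGraph V} {f : V → V} {x₀ : V}

theorem adj_apply_left (hF : IsFold G f x₀) {u v : V} (h : G.Adj u v) : G.Adj (f u) v := by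
  by_cases hu : u = x₀
  · subst hu
    by_cases hv : v = u
    · subst hv
      exact hF.adj_of_loop h
    · simpa only [hF.eq_of_ne v hv] using hF.isHom h
  · rwa [hF.eq_of_ne u hu]

theorem homotopic_id (hF : IsFold G f x₀) : Homotopic G G f id :=
  .of_adj hF.isHom (IsHom.id G) fun _ _ => hF.adj_apply_left

theorem imageGraph_homotopic_id (hF : IsFold G f x₀) :
    Homotopic (imageGraph G f) (imageGraph G f) (fun a => ⟨f a.1, a.1, rfl⟩) id := by
  refine .of_adj ?_ (IsHom.id _) ?_
  · rintro ⟨_, _⟩ ⟨_, _⟩ ⟨u, w, h, rfl, rfl⟩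
    exact ⟨f u, f w, hF.isHom h, rfl, rfl⟩
  · rintro ⟨_, _⟩ ⟨_, _⟩ ⟨u, w, h, rfl, rfl⟩
    exact ⟨f u, w, hF.adj_apply_left h, rfl, rfl⟩

end IsFold

/-- a fold `f : G → G` (agreeing with the identity except at the single
vertex `x₀`, with `f x₀ ∼ x₀` if `x₀` is looped) is a ×-homotopy equivalence from `G`
onto its image: the corestriction of `f` and the inclusion are morphisms, the
composite on `Im(f)` is ×-homotopic to the identity, and the composite on `G`
(which is `f` itself) is ×-homotopic to the identity. -/
theorem stmt18 (G : LoopGraph V) (f : V → V) (x₀ : V)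
    (hf : IsHom G G f)
    (hfold : ∀ u : V, u ≠ x₀ → f u = u)
    (hloop : G.Adj x₀ x₀ → G.Adj (f x₀) x₀) :
    IsHom G (imageGraph G f) (fun v => ⟨f v, v, rfl⟩) ∧
    IsHom (imageGraph G f) G Subtype.val ∧
    Homotopic (imageGraph G f) (imageGraph G f) (fun a => ⟨f a.1, a.1, rfl⟩) id ∧
    Homotopic G G f id := by
  have hF : IsFold G f x₀ := ⟨hf, hfold, hloop⟩
  exact ⟨isHom_rangeRestrict_imageGraph G f, hf.imageGraph_val,
    hF.imageGraph_homotopic_id, hF.homotopic_id⟩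
end
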